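/- arXiv:2007.04112 — 10 statements merged into one kernel-verified Lean document; each statement's English description precedes it below -/
import Mathlib

section
/- Let * be the involution A* = J·Aᵀ·J on UT_3(F). For any elements x₁, x₂, x₃, x₄ of UT_3(F), each symmetric or skew-symmetric, the identity (-1)^{|x₁|+|x₂|}[x₁,x₂][x₃,x₄] - (-1)^{|x₁|+|x₃|}[x₁,x₃][x₂,x₄] + (-1)^{|x₁|+|x₄|}[x₁,x₄][x₂,x₃] = 0 holds. -/
open Matrix

/-- The anti-diagonal 3×3 permutation matrix `J`. -/
noncomputable def J3 (F : Type*) [Field F] : Matrix (Fin 3) (Fin 3) F :=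
  Matrix.of fun i j => if (i : ℕ) + (j : ℕ) = 2 then 1 else 0

/-- The involution `A ↦ J·Aᵀ·J` on `UT₃(F)`. -/
noncomputable def st3 {F : Type*} [Field F] (A : Matrix (Fin 3) (Fin 3) F) :
    Matrix (Fin 3) (Fin 3) F :=
  J3 F * Aᵀ * J3 F

/-- `A` is upper triangular. -/
def UT3 {F : Type*} [Field F] (A : Matrix (Fin 3) (Fin 3) F) : Prop :=
  ∀ i j : Fin 3, (j : ℕ) < (i : ℕ) → A i j = 0

/-- commutator -/
def cm {F : Type*} [Field F] (a b : Matrix (Fin 3) (Fin 3) F) : Matrix (Fin 3) (Fin 3) F :=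
  a * b - b * a

/-- `x` is symmetric or skew-symmetric, with sign `e = (-1)^{|x|}`:
`e = -1` if `x` is symmetric (`|x| = 1`), `e = 1` if `x` is skew-symmetric (`|x| = 0`). -/
def sgn3 {F : Type*} [Field F] (x : Matrix (Fin 3) (Fin 3) F) (e : F) : Prop :=
  (st3 x = x ∧ e = -1) ∨ (st3 x = -x ∧ e = 1)

lemma st3_apply_aux {F : Type*} [Field F] (x : Matrix (Fin 3) (Fin 3) F) (i j : Fin 3) :
    st3 x i j = x (2 - j) (2 - i) := by
  fin_cases i <;> fin_cases j <;>
    simp [st3, J3, Matrix.mul_apply, Fin.sum_univ_three]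

lemma key_aux {F : Type*} [Field F] (h2 : (2:F) ≠ 0) (x : Matrix (Fin 3) (Fin 3) F) (e : F)
    (u : UT3 x) (h : sgn3 x e) :
    ∃ a b c d : F, (x = !![a,b,c;0,d,b;0,0,a] ∧ e = -1) ∨
      (x = !![a,b,0;0,0,-b;0,0,-a] ∧ e = 1) := by
  have z10 := u 1 0 (by norm_num)
  have z20 := u 2 0 (by norm_num)
  have z21 := u 2 1 (by norm_num)
  refine ⟨x 0 0, x 0 1, x 0 2, x 1 1, ?_⟩
  rcases h with ⟨hst, he⟩ | ⟨hst, he⟩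
  · left
    have h00 := congrFun (congrFun hst 0) 0
    have h01 := congrFun (congrFun hst 0) 1
    rw [st3_apply_aux] at h00 h01
    norm_num at h00 h01
    refine ⟨?_, he⟩
    ext i j
    fin_cases i <;> fin_cases j <;>
      simp_all [Matrix.cons_val_zero, Matrix.cons_val_one, Matrix.head_cons,
        Matrix.vecHead, Matrix.vecTail]
  · right
    have h00 := congrFun (congrFun hst 0) 0
    have h01 := congrFun (congrFun hst 0) 1
    have h11 := congrFun (congrFun hst 1) 1
    have h02 := congrFun (congrFun hst 0) 2
    rw [st3_apply_aux] at h00 h01 h11 h02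
    norm_num at h00 h01 h11 h02
    have hx11 : x 1 1 = 0 := by
      have h' : (2:F) * x 1 1 = 0 := by
        rw [show (2 - 1 : Fin 3) = 1 from rfl] at h11; linear_combination h11
      rcases mul_eq_zero.1 h' with h | h
      · exact absurd h h2
      · exact h
    have hx02 : x 0 2 = 0 := by
      have h' : (2:F) * x 0 2 = 0 := by linear_combination h02
      rcases mul_eq_zero.1 h' with h | h
      · exact absurd h h2
      · exact h
    refine ⟨?_, he⟩
    ext i j
    fin_cases i <;> fin_cases j <;>
      simp_all [Matrix.cons_val_zero, Matrix.cons_val_one, Matrix.head_cons,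
        Matrix.vecHead, Matrix.vecTail]

lemma sub_fin_three_aux {F : Type*} [Field F]
    (a b c d e f g h i a' b' c' d' e' f' g' h' i' : F) :
    !![a,b,c;d,e,f;g,h,i] - !![a',b',c';d',e',f';g',h',i'] =
      !![a-a',b-b',c-c';d-d',e-e',f-f';g-g',h-h',i-i'] := by
  ext x y
  fin_cases x <;> fin_cases y <;> rfl

lemma add_fin_three_aux {F : Type*} [Field F]
    (a b c d e f g h i a' b' c' d' e' f' g' h' i' : F) :
    !![a,b,c;d,e,f;g,h,i] + !![a',b',c';d',e',f';g',h',i'] =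
      !![a+a',b+b',c+c';d+d',e+e',f+f';g+g',h+h',i+i'] := by
  ext x y
  fin_cases x <;> fin_cases y <;> rfl

lemma smul_fin_three_aux {F : Type*} [Field F] (r a b c d e f g h i : F) :
    r • !![a,b,c;d,e,f;g,h,i] = !![r*a,r*b,r*c;r*d,r*e,r*f;r*g,r*h,r*i] := by
  ext x y
  fin_cases x <;> fin_cases y <;> rfl

lemma eq_zero_fin_three_aux {F : Type*} [Field F] (a b c d e f g h i : F)
    (h1 : a = 0) (h2 : b = 0) (h3 : c = 0) (h4 : d = 0) (h5 : e = 0)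
    (h6 : f = 0) (h7 : g = 0) (h8 : h = 0) (h9 : i = 0) :
    !![a,b,c;d,e,f;g,h,i] = 0 := by
  subst_vars
  ext x y
  fin_cases x <;> fin_cases y <;> rfl

set_option maxHeartbeats 2000000 in
theorem stmt4 (F : Type*) [Field F] (h2 : (2 : F) ≠ 0)
    (x1 x2 x3 x4 : Matrix (Fin 3) (Fin 3) F) (e1 e2 e3 e4 : F)
    (u1 : UT3 x1) (u2 : UT3 x2) (u3 : UT3 x3) (u4 : UT3 x4)
    (hs1 : sgn3 x1 e1) (hs2 : sgn3 x2 e2) (hs3 : sgn3 x3 e3) (hs4 : sgn3 x4 e4) :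
    (e1 * e2) • (cm x1 x2 * cm x3 x4) - (e1 * e3) • (cm x1 x3 * cm x2 x4)
      + (e1 * e4) • (cm x1 x4 * cm x2 x3) = 0 := by
  obtain ⟨a1, b1, c1, d1, r1⟩ := key_aux h2 x1 e1 u1 hs1
  obtain ⟨a2, b2, c2, d2, r2⟩ := key_aux h2 x2 e2 u2 hs2
  obtain ⟨a3, b3, c3, d3, r3⟩ := key_aux h2 x3 e3 u3 hs3
  obtain ⟨a4, b4, c4, d4, r4⟩ := key_aux h2 x4 e4 u4 hs4
  rcases r1 with ⟨rfl, rfl⟩ | ⟨rfl, rfl⟩ <;>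
  rcases r2 with ⟨rfl, rfl⟩ | ⟨rfl, rfl⟩ <;>
  rcases r3 with ⟨rfl, rfl⟩ | ⟨rfl, rfl⟩ <;>
  rcases r4 with ⟨rfl, rfl⟩ | ⟨rfl, rfl⟩ <;>
  · simp only [cm, Matrix.mul_fin_three, sub_fin_three_aux, smul_fin_three_aux,
      add_fin_three_aux]
    exact eq_zero_fin_three_aux _ _ _ _ _ _ _ _ _ (by ring) (by ring) (by ring) (by ring)
      (by ring) (by ring) (by ring) (by ring) (by ring)
end

section
/- Let * be the involution A* = J·Aᵀ·J on UT_3(F). For any skew-symmetric z₁, z₂ and any x₃, x₄ each symmetric or skew-symmetric, the identity z₁[x₃,x₄]z₂ + (-1)^{|x₃|+|x₄|} z₂[x₃,x₄]z₁ = 0 holds in UT_3(F). -/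
open Matrix

lemma st3_apply' {F : Type*} [Field F] (A : Matrix (Fin 3) (Fin 3) F) (i j : Fin 3) :
    st3 A i j = A (2 - j) (2 - i) := by
  fin_cases i <;> fin_cases j <;>
    simp [st3, J3, Matrix.mul_apply, Fin.sum_univ_three]

lemma half_eq_zero' {F : Type*} [Field F] (h2 : (2 : F) ≠ 0) {a : F} (h : a = -a) : a = 0 := by
  have h' : 2 * a = 0 := by linear_combination h
  rcases mul_eq_zero.1 h' with h'' | h''
  · exact absurd h'' h2
  · exact h''

lemma skew3 {F : Type*} [Field F] (h2 : (2 : F) ≠ 0) {z : Matrix (Fin 3) (Fin 3) F}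
    (h : st3 z = -z) :
    z 1 1 = 0 ∧ z 0 2 = 0 ∧ z 2 2 = -z 0 0 ∧ z 1 2 = -z 0 1 := by
  refine ⟨?_, ?_, ?_, ?_⟩
  · have h1 := congrFun (congrFun h 1) 1
    rw [st3_apply'] at h1
    exact half_eq_zero' h2 (by simpa using h1)
  · have h1 := congrFun (congrFun h 0) 2
    rw [st3_apply'] at h1
    exact half_eq_zero' h2 (by simpa using h1)
  · have h1 := congrFun (congrFun h 0) 0
    rw [st3_apply'] at h1
    simpa using h1
  · have h1 := congrFun (congrFun h 0) 1
    rw [st3_apply'] at h1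
    simpa using h1

lemma sym3 {F : Type*} [Field F] {x : Matrix (Fin 3) (Fin 3) F}
    (h : st3 x = x) :
    x 2 2 = x 0 0 ∧ x 1 2 = x 0 1 := by
  constructor
  · have h1 := congrFun (congrFun h 0) 0
    rw [st3_apply'] at h1
    simpa using h1
  · have h1 := congrFun (congrFun h 0) 1
    rw [st3_apply'] at h1
    simpa using h1

lemma J3_mul_J3 {F : Type*} [Field F] : (J3 F) * (J3 F) = 1 := by
  ext i j
  fin_cases i <;> fin_cases j <;>
    simp [J3, Matrix.mul_apply, Fin.sum_univ_three, Matrix.one_apply]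

lemma st3_mul {F : Type*} [Field F] (A B : Matrix (Fin 3) (Fin 3) F) :
    st3 (A * B) = st3 B * st3 A := by
  simp only [st3, Matrix.transpose_mul]
  calc J3 F * (Bᵀ * Aᵀ) * J3 F
      = J3 F * Bᵀ * (J3 F * J3 F) * Aᵀ * J3 F := by
        rw [J3_mul_J3]
        noncomm_ring
    _ = J3 F * Bᵀ * J3 F * (J3 F * Aᵀ * J3 F) := by noncomm_ring

lemma st3_sub {F : Type*} [Field F] (A B : Matrix (Fin 3) (Fin 3) F) :
    st3 (A - B) = st3 A - st3 B := by
  simp only [st3, Matrix.transpose_sub, Matrix.sub_mul, Matrix.mul_sub]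

lemma st3_cm {F : Type*} [Field F] (A B : Matrix (Fin 3) (Fin 3) F) :
    st3 (cm A B) = -(cm (st3 A) (st3 B)) := by
  simp only [cm, st3_sub, st3_mul]
  abel

/-- Strict-upper-triangularity facts for the commutator of two upper triangular matrices. -/
lemma cm_strict {F : Type*} [Field F] {a b : Matrix (Fin 3) (Fin 3) F}
    (ua : UT3 a) (ub : UT3 b) :
    cm a b 1 0 = 0 ∧ cm a b 2 0 = 0 ∧ cm a b 2 1 = 0 ∧
    cm a b 0 0 = 0 ∧ cm a b 1 1 = 0 ∧ cm a b 2 2 = 0 := by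
  have a10 : a 1 0 = 0 := ua 1 0 (by norm_num)
  have a20 : a 2 0 = 0 := ua 2 0 (by norm_num)
  have a21 : a 2 1 = 0 := ua 2 1 (by norm_num)
  have b10 : b 1 0 = 0 := ub 1 0 (by norm_num)
  have b20 : b 2 0 = 0 := ub 2 0 (by norm_num)
  have b21 : b 2 1 = 0 := ub 2 1 (by norm_num)
  refine ⟨?_, ?_, ?_, ?_, ?_, ?_⟩ <;>
    simp only [cm, Matrix.sub_apply, Matrix.mul_apply, Fin.sum_univ_three,
      a10, a20, a21, b10, b20, b21] <;> ring

/-- Core computation, case `c = 1`. -/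
lemma coreA {F : Type*} [Field F] (h2 : (2 : F) ≠ 0)
    {z1 z2 M : Matrix (Fin 3) (Fin 3) F}
    (u1 : UT3 z1) (u2 : UT3 z2)
    (hz1 : st3 z1 = -z1) (hz2 : st3 z2 = -z2)
    (m10 : M 1 0 = 0) (m20 : M 2 0 = 0) (m21 : M 2 1 = 0)
    (m00 : M 0 0 = 0) (m11 : M 1 1 = 0) (m22 : M 2 2 = 0)
    (m02 : M 0 2 = 0) (m12 : M 1 2 = -M 0 1) :
    z1 * M * z2 + z2 * M * z1 = 0 := by
  have l1a : z1 1 0 = 0 := u1 1 0 (by norm_num)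
  have l1b : z1 2 0 = 0 := u1 2 0 (by norm_num)
  have l1c : z1 2 1 = 0 := u1 2 1 (by norm_num)
  have l2a : z2 1 0 = 0 := u2 1 0 (by norm_num)
  have l2b : z2 2 0 = 0 := u2 2 0 (by norm_num)
  have l2c : z2 2 1 = 0 := u2 2 1 (by norm_num)
  obtain ⟨k1a, k1b, k1c, k1d⟩ := skew3 h2 hz1
  obtain ⟨k2a, k2b, k2c, k2d⟩ := skew3 h2 hz2
  ext i j
  fin_cases i <;> fin_cases j <;>
    simp [Matrix.mul_apply, Fin.sum_univ_three,
      l1a, l1b, l1c, l2a, l2b, l2c, k1a, k1b, k1c, k1d, k2a, k2b, k2c, k2d,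
      m10, m20, m21, m00, m11, m22, m02, m12] <;> ring

/-- Core computation, case `c = -1`. -/
lemma coreB {F : Type*} [Field F] (h2 : (2 : F) ≠ 0)
    {z1 z2 M : Matrix (Fin 3) (Fin 3) F}
    (u1 : UT3 z1) (u2 : UT3 z2)
    (hz1 : st3 z1 = -z1) (hz2 : st3 z2 = -z2)
    (m10 : M 1 0 = 0) (m20 : M 2 0 = 0) (m21 : M 2 1 = 0)
    (m00 : M 0 0 = 0) (m11 : M 1 1 = 0) (m22 : M 2 2 = 0)
    (m12 : M 1 2 = M 0 1) :
    z1 * M * z2 - z2 * M * z1 = 0 := by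
  have l1a : z1 1 0 = 0 := u1 1 0 (by norm_num)
  have l1b : z1 2 0 = 0 := u1 2 0 (by norm_num)
  have l1c : z1 2 1 = 0 := u1 2 1 (by norm_num)
  have l2a : z2 1 0 = 0 := u2 1 0 (by norm_num)
  have l2b : z2 2 0 = 0 := u2 2 0 (by norm_num)
  have l2c : z2 2 1 = 0 := u2 2 1 (by norm_num)
  obtain ⟨k1a, k1b, k1c, k1d⟩ := skew3 h2 hz1
  obtain ⟨k2a, k2b, k2c, k2d⟩ := skew3 h2 hz2
  ext i j
  fin_cases i <;> fin_cases j <;>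
    simp [Matrix.mul_apply, Fin.sum_univ_three,
      l1a, l1b, l1c, l2a, l2b, l2c, k1a, k1b, k1c, k1d, k2a, k2b, k2c, k2d,
      m10, m20, m21, m00, m11, m22, m12] <;> ring

theorem stmt5 (F : Type*) [Field F] (h2 : (2 : F) ≠ 0)
    (z1 z2 x3 x4 : Matrix (Fin 3) (Fin 3) F) (e3 e4 : F)
    (u1 : UT3 z1) (u2 : UT3 z2) (u3 : UT3 x3) (u4 : UT3 x4)
    (hz1 : st3 z1 = -z1) (hz2 : st3 z2 = -z2)
    (hs3 : sgn3 x3 e3) (hs4 : sgn3 x4 e4) :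
    z1 * cm x3 x4 * z2 + (e3 * e4) • (z2 * cm x3 x4 * z1) = 0 := by
  obtain ⟨m10, m20, m21, m00, m11, m22⟩ := cm_strict u3 u4
  rcases hs3 with ⟨h3, e3'⟩ | ⟨h3, e3'⟩ <;> rcases hs4 with ⟨h4, e4'⟩ | ⟨h4, e4'⟩ <;>
    subst e3' <;> subst e4'
  · -- sym, sym : st3 M = -M
    have hM : st3 (cm x3 x4) = -(cm x3 x4) := by rw [st3_cm, h3, h4]
    obtain ⟨_, q02, _, q12⟩ := skew3 h2 hM
    have := coreA h2 u1 u2 hz1 hz2 m10 m20 m21 m00 m11 m22 q02 q12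
    simpa using this
  · -- sym, skew : st3 M = M
    have hM : st3 (cm x3 x4) = cm x3 x4 := by
      rw [st3_cm, h3, h4]
      simp only [cm]
      noncomm_ring
    obtain ⟨_, q12⟩ := sym3 hM
    have := coreB h2 u1 u2 hz1 hz2 m10 m20 m21 m00 m11 m22 q12
    have h' : z1 * cm x3 x4 * z2 + (-1 : F) • (z2 * cm x3 x4 * z1) = 0 := by
      rw [neg_one_smul]
      linear_combination (norm := module) this
    simpa using h'
  · -- skew, sym : st3 M = M
    have hM : st3 (cm x3 x4) = cm x3 x4 := by
      rw [st3_cm, h3, h4]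
      simp only [cm]
      noncomm_ring
    obtain ⟨_, q12⟩ := sym3 hM
    have := coreB h2 u1 u2 hz1 hz2 m10 m20 m21 m00 m11 m22 q12
    have h' : z1 * cm x3 x4 * z2 + (1 * -1 : F) • (z2 * cm x3 x4 * z1) = 0 := by
      norm_num
      linear_combination (norm := module) this
    simpa using h'
  · -- skew, skew : st3 M = -M
    have hM : st3 (cm x3 x4) = -(cm x3 x4) := by
      rw [st3_cm, h3, h4]
      simp only [cm]
      noncomm_ring
    obtain ⟨_, q02, _, q12⟩ := skew3 h2 hM
    have := coreA h2 u1 u2 hz1 hz2 m10 m20 m21 m00 m11 m22 q02 q12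
    simpa using this
end

section
/- Let * be the involution A* = J·Aᵀ·J on UT_3(F). For any skew-symmetric element z₅ and any elements x₁, x₂, x₃, x₄ each symmetric or skew-symmetric, the product [x₁,x₂]·z₅·[x₃,x₄] = 0 in UT_3(F). -/
open Matrix

theorem stmt6 (F : Type*) [Field F] (h2 : (2 : F) ≠ 0)
    (x1 x2 x3 x4 z5 : Matrix (Fin 3) (Fin 3) F)
    (u1 : UT3 x1) (u2 : UT3 x2) (u3 : UT3 x3) (u4 : UT3 x4) (u5 : UT3 z5)
    (hs1 : st3 x1 = x1 ∨ st3 x1 = -x1) (hs2 : st3 x2 = x2 ∨ st3 x2 = -x2)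
    (hs3 : st3 x3 = x3 ∨ st3 x3 = -x3) (hs4 : st3 x4 = x4 ∨ st3 x4 = -x4)
    (hz5 : st3 z5 = -z5) :
    cm x1 x2 * z5 * cm x3 x4 = 0 := by
  -- z5 has zero middle diagonal entry
  have hz11 : z5 1 1 = 0 := by
    have h : st3 z5 1 1 = (-z5) 1 1 := by rw [hz5]
    simp [st3, J3, Matrix.mul_apply, Fin.sum_univ_three, Matrix.transpose_apply] at h
    have h2' : (2 : F) * z5 1 1 = 0 := by linear_combination h
    rcases mul_eq_zero.mp h2' with h' | h'
    · exact absurd h' h2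
    · exact h'
  have e110 : x1 1 0 = 0 := u1 1 0 (by norm_num)
  have e120 : x1 2 0 = 0 := u1 2 0 (by norm_num)
  have e121 : x1 2 1 = 0 := u1 2 1 (by norm_num)
  have e210 : x2 1 0 = 0 := u2 1 0 (by norm_num)
  have e220 : x2 2 0 = 0 := u2 2 0 (by norm_num)
  have e221 : x2 2 1 = 0 := u2 2 1 (by norm_num)
  have e310 : x3 1 0 = 0 := u3 1 0 (by norm_num)
  have e320 : x3 2 0 = 0 := u3 2 0 (by norm_num)
  have e321 : x3 2 1 = 0 := u3 2 1 (by norm_num)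
  have e410 : x4 1 0 = 0 := u4 1 0 (by norm_num)
  have e420 : x4 2 0 = 0 := u4 2 0 (by norm_num)
  have e421 : x4 2 1 = 0 := u4 2 1 (by norm_num)
  have e510 : z5 1 0 = 0 := u5 1 0 (by norm_num)
  have e520 : z5 2 0 = 0 := u5 2 0 (by norm_num)
  have e521 : z5 2 1 = 0 := u5 2 1 (by norm_num)
  set c := cm x1 x2 with hc
  set d := cm x3 x4 with hd
  have c00 : c 0 0 = 0 := by
    simp only [hc, cm, Matrix.sub_apply, Matrix.mul_apply, Fin.sum_univ_three,
      e110, e120, e210, e220, mul_zero, zero_mul, add_zero, zero_add]; ring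
  have c10 : c 1 0 = 0 := by
    simp only [hc, cm, Matrix.sub_apply, Matrix.mul_apply, Fin.sum_univ_three,
      e110, e120, e121, e210, e220, e221, mul_zero, zero_mul, add_zero, zero_add]; ring
  have c11 : c 1 1 = 0 := by
    simp only [hc, cm, Matrix.sub_apply, Matrix.mul_apply, Fin.sum_univ_three,
      e110, e120, e121, e210, e220, e221, mul_zero, zero_mul, add_zero, zero_add]; ring
  have c20 : c 2 0 = 0 := by
    simp only [hc, cm, Matrix.sub_apply, Matrix.mul_apply, Fin.sum_univ_three,
      e110, e120, e121, e210, e220, e221, mul_zero, zero_mul, add_zero, zero_add]; ring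
  have c21 : c 2 1 = 0 := by
    simp only [hc, cm, Matrix.sub_apply, Matrix.mul_apply, Fin.sum_univ_three,
      e110, e120, e121, e210, e220, e221, mul_zero, zero_mul, add_zero, zero_add]; ring
  have c22 : c 2 2 = 0 := by
    simp only [hc, cm, Matrix.sub_apply, Matrix.mul_apply, Fin.sum_univ_three,
      e110, e120, e121, e210, e220, e221, mul_zero, zero_mul, add_zero, zero_add]; ring
  have d00 : d 0 0 = 0 := by
    simp only [hd, cm, Matrix.sub_apply, Matrix.mul_apply, Fin.sum_univ_three,
      e310, e320, e410, e420, mul_zero, zero_mul, add_zero, zero_add]; ring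
  have d10 : d 1 0 = 0 := by
    simp only [hd, cm, Matrix.sub_apply, Matrix.mul_apply, Fin.sum_univ_three,
      e310, e320, e321, e410, e420, e421, mul_zero, zero_mul, add_zero, zero_add]; ring
  have d11 : d 1 1 = 0 := by
    simp only [hd, cm, Matrix.sub_apply, Matrix.mul_apply, Fin.sum_univ_three,
      e310, e320, e321, e410, e420, e421, mul_zero, zero_mul, add_zero, zero_add]; ring
  have d20 : d 2 0 = 0 := by
    simp only [hd, cm, Matrix.sub_apply, Matrix.mul_apply, Fin.sum_univ_three,
      e310, e320, e321, e410, e420, e421, mul_zero, zero_mul, add_zero, zero_add]; ring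
  have d21 : d 2 1 = 0 := by
    simp only [hd, cm, Matrix.sub_apply, Matrix.mul_apply, Fin.sum_univ_three,
      e310, e320, e321, e410, e420, e421, mul_zero, zero_mul, add_zero, zero_add]; ring
  have d22 : d 2 2 = 0 := by
    simp only [hd, cm, Matrix.sub_apply, Matrix.mul_apply, Fin.sum_univ_three,
      e310, e320, e321, e410, e420, e421, mul_zero, zero_mul, add_zero, zero_add]; ring
  ext i j
  fin_cases i <;> fin_cases j <;>
    simp [Matrix.mul_apply, Fin.sum_univ_three,
      c00, c10, c11, c20, c21, c22, d00, d10, d11, d20, d21, d22,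
      e510, e520, e521, hz11]
end

section
/- In UT_3(F) with the involution A* = J·Aᵀ·J, for any elements x₁,...,x₅ each symmetric or skew-symmetric, the identity [x₁,x₂][x₃,x₄]x₅ + (-1)^{|x₅|} x₅[x₁,x₂][x₃,x₄] = 0 holds, where |x₅| = 1 if x₅ is symmetric and 0 if skew-symmetric. -/
set_option maxHeartbeats 2000000


open Matrix

theorem stmt8 (F : Type*) [Field F] (h2 : (2 : F) ≠ 0)
    (x1 x2 x3 x4 x5 : Matrix (Fin 3) (Fin 3) F) (e5 : F)
    (u1 : UT3 x1) (u2 : UT3 x2) (u3 : UT3 x3) (u4 : UT3 x4) (u5 : UT3 x5)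
    (hs1 : st3 x1 = x1 ∨ st3 x1 = -x1) (hs2 : st3 x2 = x2 ∨ st3 x2 = -x2)
    (hs3 : st3 x3 = x3 ∨ st3 x3 = -x3) (hs4 : st3 x4 = x4 ∨ st3 x4 = -x4)
    (hs5 : sgn3 x5 e5) :
    cm x1 x2 * cm x3 x4 * x5 + e5 • (x5 * (cm x1 x2 * cm x3 x4)) = 0 := by
  have a10 := u1 1 0 (by norm_num); have a20 := u1 2 0 (by norm_num); have a21 := u1 2 1 (by norm_num)
  have b10 := u2 1 0 (by norm_num); have b20 := u2 2 0 (by norm_num); have b21 := u2 2 1 (by norm_num)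
  have c10 := u3 1 0 (by norm_num); have c20 := u3 2 0 (by norm_num); have c21 := u3 2 1 (by norm_num)
  have d10 := u4 1 0 (by norm_num); have d20 := u4 2 0 (by norm_num); have d21 := u4 2 1 (by norm_num)
  have f10 := u5 1 0 (by norm_num); have f20 := u5 2 0 (by norm_num); have f21 := u5 2 1 (by norm_num)
  have h5 : x5 2 2 = -e5 * x5 0 0 := by
    rcases hs5 with ⟨h, he⟩ | ⟨h, he⟩ <;>
    · have := congrFun (congrFun h 0) 0
      simp [st3, J3, Matrix.mul_apply, Fin.sum_univ_three] at this
      subst he; simp [this] <;> ring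
  ext i j
  fin_cases i <;> fin_cases j <;>
    simp [cm, Matrix.mul_apply, Fin.sum_univ_three, a10, a20, a21, b10, b20, b21,
      c10, c20, c21, d10, d20, d21, f10, f20, f21, h5] <;> ring
end

section
/- In UT_3(F) with the involution A* = J·Aᵀ·J, for skew-symmetric z₁, z₂ and elements x₃, x₄ that are both symmetric or both skew-symmetric, the identity [z₁,z₂][x₃,x₄] = z₁[x₃,x₄]z₂ holds. -/
open Matrix

/-- A skew-symmetric upper-triangular matrix has the explicit form
`!![a, b, 0; 0, 0, -b; 0, 0, -a]`. -/
lemma skew_form3 {F : Type*} [Field F] (h2 : (2:F) ≠ 0) (z : Matrix (Fin 3) (Fin 3) F)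
    (u : UT3 z) (hz : st3 z = -z) :
    z = !![z 0 0, z 0 1, 0; 0, 0, -(z 0 1); 0, 0, -(z 0 0)] := by
  have h10 := u 1 0 (by norm_num)
  have h20 := u 2 0 (by norm_num)
  have h21 := u 2 1 (by norm_num)
  have e11 := congrFun (congrFun hz 1) 1
  have e00 := congrFun (congrFun hz 2) 2
  have e01 := congrFun (congrFun hz 1) 2
  have e22 := congrFun (congrFun hz 0) 2
  simp [st3, J3, Matrix.mul_apply, Fin.sum_univ_three] at e11 e00 e01 e22
  have h11 : z 1 1 = 0 := by
    have h : (2:F) * z 1 1 = 0 := by linear_combination e11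
    exact (mul_eq_zero.mp h).resolve_left h2
  have h02 : z 0 2 = 0 := by
    have h : (2:F) * z 0 2 = 0 := by linear_combination e22
    exact (mul_eq_zero.mp h).resolve_left h2
  have h22 : z 2 2 = -(z 0 0) := by linear_combination e00
  have h12 : z 1 2 = -(z 0 1) := by linear_combination e01
  ext i j
  fin_cases i <;> fin_cases j <;>
    simp [h10, h20, h21, h11, h02, h22, h12, Matrix.vecHead, Matrix.vecTail]

/-- A symmetric upper-triangular matrix has the explicit form
`!![a, b, c; 0, d, b; 0, 0, a]`. -/
lemma sym_form3 {F : Type*} [Field F] (x : Matrix (Fin 3) (Fin 3) F)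
    (u : UT3 x) (hx : st3 x = x) :
    x = !![x 0 0, x 0 1, x 0 2; 0, x 1 1, x 0 1; 0, 0, x 0 0] := by
  have h10 := u 1 0 (by norm_num)
  have h20 := u 2 0 (by norm_num)
  have h21 := u 2 1 (by norm_num)
  have e00 := congrFun (congrFun hx 2) 2
  have e01 := congrFun (congrFun hx 1) 2
  simp [st3, J3, Matrix.mul_apply, Fin.sum_univ_three] at e00 e01
  have h22 : x 2 2 = x 0 0 := e00.symm
  have h12 : x 1 2 = x 0 1 := e01.symm
  ext i j
  fin_cases i <;> fin_cases j <;>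
    simp [h10, h20, h21, h22, h12, Matrix.vecHead, Matrix.vecTail]

lemma sub_fin_three' {F : Type*} [Field F]
    (a₁₁ a₁₂ a₁₃ a₂₁ a₂₂ a₂₃ a₃₁ a₃₂ a₃₃ b₁₁ b₁₂ b₁₃ b₂₁ b₂₂ b₂₃ b₃₁ b₃₂ b₃₃ : F) :
    !![a₁₁, a₁₂, a₁₃; a₂₁, a₂₂, a₂₃; a₃₁, a₃₂, a₃₃] -
    !![b₁₁, b₁₂, b₁₃; b₂₁, b₂₂, b₂₃; b₃₁, b₃₂, b₃₃] =
    !![a₁₁-b₁₁, a₁₂-b₁₂, a₁₃-b₁₃; a₂₁-b₂₁, a₂₂-b₂₂, a₂₃-b₂₃; a₃₁-b₃₁, a₃₂-b₃₂, a₃₃-b₃₃] := by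
  ext i j
  fin_cases i <;> fin_cases j <;> simp

lemma key_sym3 {F : Type*} [Field F] (a1 b1 a2 b2 a3 b3 c3 d3 a4 b4 c4 d4 : F) :
    (!![a1, b1, 0; 0, 0, -b1; 0, 0, -a1] * !![a2, b2, 0; 0, 0, -b2; 0, 0, -a2] -
     !![a2, b2, 0; 0, 0, -b2; 0, 0, -a2] * !![a1, b1, 0; 0, 0, -b1; 0, 0, -a1]) *
    (!![a3, b3, c3; 0, d3, b3; 0, 0, a3] * !![a4, b4, c4; 0, d4, b4; 0, 0, a4] -
     !![a4, b4, c4; 0, d4, b4; 0, 0, a4] * !![a3, b3, c3; 0, d3, b3; 0, 0, a3]) =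
    !![a1, b1, 0; 0, 0, -b1; 0, 0, -a1] *
    (!![a3, b3, c3; 0, d3, b3; 0, 0, a3] * !![a4, b4, c4; 0, d4, b4; 0, 0, a4] -
     !![a4, b4, c4; 0, d4, b4; 0, 0, a4] * !![a3, b3, c3; 0, d3, b3; 0, 0, a3]) *
    !![a2, b2, 0; 0, 0, -b2; 0, 0, -a2] := by
  rw [Matrix.mul_fin_three, Matrix.mul_fin_three, Matrix.mul_fin_three, Matrix.mul_fin_three,
    sub_fin_three', sub_fin_three', Matrix.mul_fin_three, Matrix.mul_fin_three,
    Matrix.mul_fin_three]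
  ext i j
  fin_cases i <;> fin_cases j <;> simp <;> ring

lemma key_skew3 {F : Type*} [Field F] (a1 b1 a2 b2 a3 b3 a4 b4 : F) :
    (!![a1, b1, 0; 0, 0, -b1; 0, 0, -a1] * !![a2, b2, 0; 0, 0, -b2; 0, 0, -a2] -
     !![a2, b2, 0; 0, 0, -b2; 0, 0, -a2] * !![a1, b1, 0; 0, 0, -b1; 0, 0, -a1]) *
    (!![a3, b3, 0; 0, 0, -b3; 0, 0, -a3] * !![a4, b4, 0; 0, 0, -b4; 0, 0, -a4] -
     !![a4, b4, 0; 0, 0, -b4; 0, 0, -a4] * !![a3, b3, 0; 0, 0, -b3; 0, 0, -a3]) =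
    !![a1, b1, 0; 0, 0, -b1; 0, 0, -a1] *
    (!![a3, b3, 0; 0, 0, -b3; 0, 0, -a3] * !![a4, b4, 0; 0, 0, -b4; 0, 0, -a4] -
     !![a4, b4, 0; 0, 0, -b4; 0, 0, -a4] * !![a3, b3, 0; 0, 0, -b3; 0, 0, -a3]) *
    !![a2, b2, 0; 0, 0, -b2; 0, 0, -a2] := by
  rw [Matrix.mul_fin_three, Matrix.mul_fin_three, Matrix.mul_fin_three, Matrix.mul_fin_three,
    sub_fin_three', sub_fin_three', Matrix.mul_fin_three, Matrix.mul_fin_three,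
    Matrix.mul_fin_three]
  ext i j
  fin_cases i <;> fin_cases j <;> simp <;> ring

theorem stmt10 (F : Type*) [Field F] (h2 : (2 : F) ≠ 0)
    (z1 z2 x3 x4 : Matrix (Fin 3) (Fin 3) F)
    (u1 : UT3 z1) (u2 : UT3 z2) (u3 : UT3 x3) (u4 : UT3 x4)
    (hz1 : st3 z1 = -z1) (hz2 : st3 z2 = -z2)
    (hx : (st3 x3 = x3 ∧ st3 x4 = x4) ∨ (st3 x3 = -x3 ∧ st3 x4 = -x4)) :
    cm z1 z2 * cm x3 x4 = z1 * cm x3 x4 * z2 := by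
  have hf1 := skew_form3 h2 z1 u1 hz1
  have hf2 := skew_form3 h2 z2 u2 hz2
  rcases hx with ⟨h3, h4⟩ | ⟨h3, h4⟩
  · have hf3 := sym_form3 x3 u3 h3
    have hf4 := sym_form3 x4 u4 h4
    rw [cm, cm, hf1, hf2, hf3, hf4]
    exact key_sym3 _ _ _ _ _ _ _ _ _ _ _ _
  · have hf3 := skew_form3 h2 x3 u3 h3
    have hf4 := skew_form3 h2 x4 u4 h4
    rw [cm, cm, hf1, hf2, hf3, hf4]
    exact key_skew3 _ _ _ _ _ _ _ _
end

section
/- In UT_3(F) with the involution A* = J·Aᵀ·J, for skew-symmetric z₁, z₂, z₃, the identity z₁[z₃,z₂] - z₂[z₃,z₁] + z₃[z₂,z₁] = 0 holds. -/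
open Matrix

lemma entries {F : Type*} [Field F] (h2 : (2:F) ≠ 0) (z : Matrix (Fin 3) (Fin 3) F)
    (u : UT3 z) (hz : st3 z = -z) :
    z 1 0 = 0 ∧ z 2 0 = 0 ∧ z 2 1 = 0 ∧ z 0 2 = 0 ∧ z 1 1 = 0 ∧
    z 2 2 = -z 0 0 ∧ z 1 2 = -z 0 1 := by
  have e : ∀ i j : Fin 3, (st3 z) i j = -z i j := fun i j => by rw [hz]; simp
  have key : ∀ i j : Fin 3, z (2-j) (2-i) = -z i j := by
    intro i j
    have := e i j
    simp [st3, J3, Matrix.mul_apply, Fin.sum_univ_three] at this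
    fin_cases i <;> fin_cases j <;> simpa using this
  refine ⟨u 1 0 (by norm_num), u 2 0 (by norm_num), u 2 1 (by norm_num), ?_, ?_, ?_, ?_⟩
  · have := key 0 2; have h : (2:F) * z 0 2 = 0 := by simp at this; linear_combination this
    exact (mul_eq_zero.mp h).resolve_left h2
  · have := key 1 1; have h : (2:F) * z 1 1 = 0 := by simp at this; linear_combination this
    exact (mul_eq_zero.mp h).resolve_left h2
  · have := key 2 2; simp at this; linear_combination this
  · have := key 1 2; simp at this; linear_combination this

theorem stmt12 (F : Type*) [Field F] (h2 : (2 : F) ≠ 0)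
    (z1 z2 z3 : Matrix (Fin 3) (Fin 3) F)
    (u1 : UT3 z1) (u2 : UT3 z2) (u3 : UT3 z3)
    (hz1 : st3 z1 = -z1) (hz2 : st3 z2 = -z2) (hz3 : st3 z3 = -z3) :
    z1 * cm z3 z2 - z2 * cm z3 z1 + z3 * cm z2 z1 = 0 := by
  obtain ⟨a1,b1,c1,d1,e1,f1,g1⟩ := entries h2 z1 u1 hz1
  obtain ⟨a2,b2,c2,d2,e2,f2,g2⟩ := entries h2 z2 u2 hz2
  obtain ⟨a3,b3,c3,d3,e3,f3,g3⟩ := entries h2 z3 u3 hz3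
  ext i j
  fin_cases i <;> fin_cases j <;>
    simp [cm, Matrix.mul_apply, Fin.sum_univ_three, a1,b1,c1,d1,e1,f1,g1,
      a2,b2,c2,d2,e2,f2,g2,a3,b3,c3,d3,e3,f3,g3] <;> ring
end

section
/- Let n ≥ 3 and let ∘ be the involution A∘ = J·Aᵀ·J on UT_n(F) (or A∘ = D·J·Aᵀ·J·D for n even, with D = diag(I_m, -I_m)). Suppose f is a polynomial function in symmetric and skew-symmetric variables (an element of the free associative algebra with involution evaluated on UT_n(F)) such that every evaluation at symmetric elements a₁,...,a_k and skew-symmetric elements b₁,...,b_s lies in the center F·I_n of UT_n(F). Then f = g + λ where λ ∈ F is a constant and g vanishes under every such evaluation. In particular, C(UT_n(F),∘) = Id(UT_n(F),∘) + F. -/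
open Matrix

/-- The anti-diagonal n×n permutation matrix. -/
noncomputable def Jmat (F : Type*) [Field F] (n : ℕ) : Matrix (Fin n) (Fin n) F :=
  Matrix.of fun i j => if (i : ℕ) + (j : ℕ) + 1 = n then 1 else 0

/-- `A` is upper triangular. -/
def UTn {F : Type*} [Field F] {n : ℕ} (A : Matrix (Fin n) (Fin n) F) : Prop :=
  ∀ i j : Fin n, (j : ℕ) < (i : ℕ) → A i j = 0

section Helpers

variable {F : Type*} [Field F] {n : ℕ}

lemma Jmat_mul (M : Matrix (Fin n) (Fin n) F) :
    Jmat F n * M = Matrix.of fun i j => M i.rev j := by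
  ext i j
  rw [Matrix.mul_apply, Finset.sum_eq_single i.rev]
  · have h : (i : ℕ) + (i.rev : ℕ) + 1 = n := by
      have := i.isLt; simp [Fin.val_rev]; omega
    simp only [Jmat, Matrix.of_apply, if_pos h, one_mul, mul_one]
  · intro k _ hk
    have h : (i : ℕ) + (k : ℕ) + 1 ≠ n := by
      intro h; apply hk; apply Fin.ext; have := i.isLt; simp [Fin.val_rev]; omega
    simp [Jmat, h]
  · simp

lemma mul_Jmat (M : Matrix (Fin n) (Fin n) F) :
    M * Jmat F n = Matrix.of fun i j => M i j.rev := by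
  ext i j
  rw [Matrix.mul_apply, Finset.sum_eq_single j.rev]
  · have h : (j.rev : ℕ) + (j : ℕ) + 1 = n := by
      have := j.isLt; simp [Fin.val_rev]; omega
    simp only [Jmat, Matrix.of_apply, if_pos h, one_mul, mul_one]
  · intro k _ hk
    have h : (k : ℕ) + (j : ℕ) + 1 ≠ n := by
      intro h; apply hk; apply Fin.ext; have := j.isLt; simp [Fin.val_rev]; omega
    simp [Jmat, h]
  · simp

lemma JdJ (d : Fin n → F) :
    Jmat F n * Matrix.diagonal d * Jmat F n = Matrix.diagonal (fun i => d i.rev) := by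
  rw [Jmat_mul, mul_Jmat]
  ext i j
  by_cases h : i = j
  · subst h; simp [Matrix.diagonal]
  · have : i.rev ≠ j.rev := fun hh => h (Fin.rev_injective hh)
    simp [Matrix.diagonal, h, this]

def UTsub (F : Type*) [Field F] (n : ℕ) : Subalgebra F (Matrix (Fin n) (Fin n) F) where
  carrier := {A | UTn A}
  mul_mem' := by
    intro A B hA hB i j hij
    rw [Matrix.mul_apply]
    apply Finset.sum_eq_zero
    intro x _
    rcases lt_or_ge (x : ℕ) (i : ℕ) with h | h
    · rw [hA i x h, zero_mul]
    · rw [hB x j (lt_of_lt_of_le hij h), mul_zero]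
  add_mem' := by
    intro A B hA hB i j hij
    simp [Matrix.add_apply, hA i j hij, hB i j hij]
  algebraMap_mem' := by
    intro r i j hij
    have : i ≠ j := by intro h; subst h; omega
    simp [Matrix.algebraMap_matrix_apply, this]

def diagHom (F : Type*) [Field F] (n : ℕ) (i : Fin n) : UTsub F n →ₐ[F] F where
  toFun A := A.1 i i
  map_one' := by simp [Matrix.one_apply]
  map_mul' := by
    intro A B
    show (A.1 * B.1) i i = A.1 i i * B.1 i i
    rw [Matrix.mul_apply, Finset.sum_eq_single i]
    · intro x _ hx
      rcases lt_or_ge (x : ℕ) (i : ℕ) with h | h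
      · rw [A.2 i x h, zero_mul]
      · have : (i : ℕ) < (x : ℕ) := lt_of_le_of_ne h (by simpa [eq_comm] using fun hh => hx (Fin.ext hh))
        rw [B.2 x i this, mul_zero]
    · simp
  map_zero' := rfl
  map_add' := by intro A B; simp [Matrix.add_apply]
  commutes' := by intro r; simp [Matrix.algebraMap_matrix_apply]

lemma entry_eval {k s : ℕ}
    (a : Fin k → Matrix (Fin n) (Fin n) F) (b : Fin s → Matrix (Fin n) (Fin n) F)
    (ha : ∀ p, UTn (a p)) (hb : ∀ q, UTn (b q)) (i : Fin n)
    (z : FreeAlgebra F (Fin k ⊕ Fin s)) :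
    (FreeAlgebra.lift F (Sum.elim a b) z) i i =
      FreeAlgebra.lift F (Sum.elim (fun p => a p i i) (fun q => b q i i)) z := by
  set a' : Fin k → UTsub F n := fun p => ⟨a p, ha p⟩
  set b' : Fin s → UTsub F n := fun q => ⟨b q, hb q⟩
  have h1 : (UTsub F n).val.comp (FreeAlgebra.lift F (Sum.elim a' b')) =
      FreeAlgebra.lift F (Sum.elim a b) := by
    apply FreeAlgebra.hom_ext
    funext x
    rcases x with p | q <;> simp [a', b']
  have h2 : (diagHom F n i).comp (FreeAlgebra.lift F (Sum.elim a' b')) =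
      FreeAlgebra.lift F (Sum.elim (fun p => a p i i) (fun q => b q i i)) := by
    apply FreeAlgebra.hom_ext
    funext x
    rcases x with p | q <;> simp [a', b', diagHom] <;> rfl
  have e1 : FreeAlgebra.lift F (Sum.elim a b) z =
      (UTsub F n).val (FreeAlgebra.lift F (Sum.elim a' b') z) := by
    rw [← h1]; rfl
  rw [e1, ← h2]
  rfl

end Helpers

/-- For `n ≥ 3` and the involution `A ↦ J·Aᵀ·J` (or its variant `A ↦ D·J·Aᵀ·J·D` for `n`
even), every `*`-central polynomial for `UT_n(F)` is a `*`-polynomial identity plus a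
constant: `C(UT_n(F),∘) = Id(UT_n(F),∘) + F`. -/
theorem stmt13 (F : Type*) [Field F] (h2 : (2 : F) ≠ 0) (n : ℕ) (hn : 3 ≤ n)
    (inv : Matrix (Fin n) (Fin n) F → Matrix (Fin n) (Fin n) F)
    (hinv : (∀ A, inv A = Jmat F n * Aᵀ * Jmat F n) ∨
      (∃ m : ℕ, n = 2 * m ∧ ∀ A, inv A =
        (Matrix.diagonal fun i : Fin n => if (i : ℕ) < m then (1 : F) else -1) *
          (Jmat F n * Aᵀ * Jmat F n) *
        (Matrix.diagonal fun i : Fin n => if (i : ℕ) < m then (1 : F) else -1)))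
    (k s : ℕ) (f : FreeAlgebra F (Fin k ⊕ Fin s))
    (hc : ∀ (a : Fin k → Matrix (Fin n) (Fin n) F) (b : Fin s → Matrix (Fin n) (Fin n) F),
      (∀ i, UTn (a i) ∧ inv (a i) = a i) →
      (∀ j, UTn (b j) ∧ inv (b j) = -(b j)) →
      ∃ c : F, FreeAlgebra.lift F (Sum.elim a b) f = c • (1 : Matrix (Fin n) (Fin n) F)) :
    ∃ (lam : F) (g : FreeAlgebra F (Fin k ⊕ Fin s)),
      f = g + algebraMap F (FreeAlgebra F (Fin k ⊕ Fin s)) lam ∧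
      ∀ (a : Fin k → Matrix (Fin n) (Fin n) F) (b : Fin s → Matrix (Fin n) (Fin n) F),
        (∀ i, UTn (a i) ∧ inv (a i) = a i) →
        (∀ j, UTn (b j) ∧ inv (b j) = -(b j)) →
        FreeAlgebra.lift F (Sum.elim a b) g = 0 := by
  haveI : NeZero n := ⟨by omega⟩
  -- involution on diagonal matrices reverses the diagonal
  have hinvd : ∀ d : Fin n → F, inv (Matrix.diagonal d) = Matrix.diagonal (fun i => d i.rev) := by
    intro d
    rcases hinv with h | ⟨m, hm, h⟩
    · rw [h, Matrix.diagonal_transpose, JdJ]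
    · rw [h, Matrix.diagonal_transpose, JdJ, Matrix.diagonal_mul_diagonal,
        Matrix.diagonal_mul_diagonal]
      apply congrArg Matrix.diagonal
      funext i
      by_cases hi : (i : ℕ) < m <;> simp [hi]
  -- diagonal matrices are upper triangular
  have hUTd : ∀ d : Fin n → F, UTn (Matrix.diagonal d) := by
    intro d i j hij
    have : i ≠ j := by intro h; subst h; omega
    exact Matrix.diagonal_apply_ne d this
  -- basic facts about indices
  have hv0 : ((0 : Fin n) : ℕ) = 0 := by simp
  have hvr0 : ((Fin.rev 0 : Fin n) : ℕ) = n - 1 := by simp [Fin.val_rev]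
  have h0rev : (0 : Fin n) ≠ Fin.rev 0 := by
    intro h
    have := congrArg Fin.val h
    rw [hv0, hvr0] at this
    omega
  set i1 : Fin n := ⟨1, by omega⟩ with hi1
  have hi10 : i1 ≠ 0 := by
    intro h; have := congrArg Fin.val h; rw [hv0] at this; simp [hi1] at this
  have hi1rev : i1 ≠ Fin.rev 0 := by
    intro h; have := congrArg Fin.val h; rw [hvr0] at this; simp [hi1] at this; omega
  -- the constant term of f
  set lam : F :=
    FreeAlgebra.lift F (Sum.elim (fun _ : Fin k => (0 : F)) (fun _ : Fin s => (0 : F))) f with hlam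
  -- the special symmetric/skew diagonal matrices
  set dA : F → Fin n → F := fun t i => if i = 0 then t else if i = Fin.rev 0 then t else 0 with hdA
  set dB : F → Fin n → F := fun t i => if i = 0 then t else if i = Fin.rev 0 then -t else 0 with hdB
  have erev1 : ∀ i : Fin n, i.rev = 0 ↔ i = Fin.rev 0 := by
    intro i
    constructor <;> intro h
    · rw [← h, Fin.rev_rev]
    · rw [h, Fin.rev_rev]
  have erev2 : ∀ i : Fin n, i.rev = Fin.rev 0 ↔ i = 0 := by
    intro i
    constructor <;> intro h
    · exact Fin.rev_injective h
    · rw [h]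
  have hdArev : ∀ t, (fun i : Fin n => dA t i.rev) = dA t := by
    intro t; funext i
    by_cases h1 : i = 0
    · simp [hdA, h1, erev1, erev2, h0rev, h0rev.symm, Ne.symm h0rev]
    · by_cases h3 : i = Fin.rev 0
      · simp [hdA, h1, h3, erev1, erev2, h0rev]
      · simp [hdA, h1, h3, erev1, erev2, h0rev]
  have hdBrev : ∀ t, (fun i : Fin n => dB t i.rev) = fun i => -(dB t i) := by
    intro t; funext i
    by_cases h1 : i = 0
    · simp [hdB, h1, erev1, erev2, h0rev, h0rev.symm, Ne.symm h0rev]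
    · by_cases h3 : i = Fin.rev 0
      · simp [hdB, h1, h3, erev1, erev2, h0rev]
      · simp [hdB, h1, h3, erev1, erev2, h0rev]
  -- key step: the scalar evaluation of f is constant
  have key : ∀ (x : Fin k → F) (y : Fin s → F),
      FreeAlgebra.lift F (Sum.elim x y) f = lam := by
    intro x y
    set A : Fin k → Matrix (Fin n) (Fin n) F := fun p => Matrix.diagonal (dA (x p)) with hA
    set B : Fin s → Matrix (Fin n) (Fin n) F := fun q => Matrix.diagonal (dB (y q)) with hB
    have hAadm : ∀ p, UTn (A p) ∧ inv (A p) = A p := by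
      intro p
      refine ⟨hUTd _, ?_⟩
      rw [hA, hinvd, hdArev]
    have hBadm : ∀ q, UTn (B q) ∧ inv (B q) = -(B q) := by
      intro q
      refine ⟨hUTd _, ?_⟩
      rw [hB, hinvd, hdBrev]
      simp
    obtain ⟨c, hcv⟩ := hc A B hAadm hBadm
    have ent : ∀ i : Fin n, (FreeAlgebra.lift F (Sum.elim A B) f) i i = c := by
      intro i; rw [hcv]; simp [Matrix.one_apply]
    have e0 := entry_eval A B (fun p => (hAadm p).1) (fun q => (hBadm q).1) 0 f
    have e1 := entry_eval A B (fun p => (hAadm p).1) (fun q => (hBadm q).1) i1 f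
    rw [ent 0] at e0
    rw [ent i1] at e1
    have v0 : (fun p => A p 0 0) = x := by
      funext p; simp [hA, hdA, Matrix.diagonal_apply_eq]
    have w0 : (fun q => B q 0 0) = y := by
      funext q; simp [hB, hdB, Matrix.diagonal_apply_eq]
    have v1 : (fun p => A p i1 i1) = fun _ : Fin k => (0 : F) := by
      funext p; simp [hA, hdA, Matrix.diagonal_apply_eq, hi10, hi1rev]
    have w1 : (fun q => B q i1 i1) = fun _ : Fin s => (0 : F) := by
      funext q; simp [hB, hdB, Matrix.diagonal_apply_eq, hi10, hi1rev]
    rw [v0, w0] at e0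
    rw [v1, w1] at e1
    rw [← e0, e1, hlam]
  -- conclude
  refine ⟨lam, f - algebraMap F _ lam, by rw [sub_add_cancel], ?_⟩
  intro a b ha hb
  obtain ⟨c, hcv⟩ := hc a b ha hb
  have e0 := entry_eval a b (fun p => (ha p).1) (fun q => (hb q).1) 0 f
  have ent : (FreeAlgebra.lift F (Sum.elim a b) f) 0 0 = c := by
    rw [hcv]; simp [Matrix.one_apply]
  rw [ent] at e0
  have hce : c = lam := by rw [e0]; exact key _ _
  rw [map_sub, hcv, AlgHom.commutes, hce, Algebra.algebraMap_eq_smul_one]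
  simp
end

section
/- Let ∘ be an involution on UT_n(F) with e₁₁∘ = e_nn, and let f be a noncommutative polynomial without constant term in variables y₁,...,y_k, z₁,...,z_s. Set A = e₁₁ + e_nn (symmetric) and B = e₁₁ - e_nn (skew-symmetric). If every evaluation of f with the yᵢ at symmetric elements and the zⱼ at skew-symmetric elements of UT_n(F) lies in the center F·I_n, and n ≥ 3, then for all scalars a₁,...,a_k, b₁,...,b_s ∈ F one has f(a₁,...,a_k,b₁,...,b_s) = 0 in F; that is, f is a polynomial identity for the field F itself. -/
open Matrix

lemma std_diag_eq {F : Type*} [Field F] {n : ℕ} (t : Fin n) :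
    Matrix.single t t (1 : F) = Matrix.diagonal (fun x => if x = t then 1 else 0) := by
  ext x y
  by_cases hxy : x = y
  · subst hxy
    by_cases hx : x = t
    · subst hx; simp
    · rw [Matrix.single_apply_of_ne _ _ _ _ _ (fun h => hx h.1.symm)]
      simp [hx]
  · rw [Matrix.single_apply_of_ne _ _ _ _ _
      (fun h => hxy (h.1.symm.trans h.2)), Matrix.diagonal_apply_ne _ hxy]

set_option maxHeartbeats 1000000 in
/-- Let `∘` be an involution on `UT_n(F)` (`n ≥ 3`) with `e₁₁∘ = e_nn`, and let `f` be a
noncommutative polynomial without constant term. If every evaluation of `f` at symmetric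
and skew-symmetric upper triangular matrices lies in the center `F·Iₙ`, then `f` is a
polynomial identity for the field `F` itself. -/
theorem stmt14 (F : Type*) [Field F] (h2 : (2 : F) ≠ 0) (n : ℕ) (hn : 3 ≤ n)
    (inv : Matrix (Fin n) (Fin n) F → Matrix (Fin n) (Fin n) F)
    (hadd : ∀ A B, inv (A + B) = inv A + inv B)
    (hsmul : ∀ (c : F) A, inv (c • A) = c • inv A)
    (hmul : ∀ A B, inv (A * B) = inv B * inv A)
    (hinvol : ∀ A, inv (inv A) = A)
    (hUT : ∀ A, UTn A → UTn (inv A))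
    (he : inv (single (⟨0, by omega⟩ : Fin n) (⟨0, by omega⟩ : Fin n) 1) =
      single (⟨n - 1, by omega⟩ : Fin n) (⟨n - 1, by omega⟩ : Fin n) 1)
    (k s : ℕ) (f : FreeAlgebra F (Fin k ⊕ Fin s))
    (hconst : FreeAlgebra.lift F (fun _ : Fin k ⊕ Fin s => (0 : F)) f = 0)
    (hc : ∀ (a : Fin k → Matrix (Fin n) (Fin n) F) (b : Fin s → Matrix (Fin n) (Fin n) F),
      (∀ i, UTn (a i) ∧ inv (a i) = a i) →
      (∀ j, UTn (b j) ∧ inv (b j) = -(b j)) →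
      ∃ c : F, FreeAlgebra.lift F (Sum.elim a b) f = c • (1 : Matrix (Fin n) (Fin n) F)) :
    ∀ (a : Fin k → F) (b : Fin s → F),
      FreeAlgebra.lift F (Sum.elim a b) f = 0 := by
  intro a b
  set i0 : Fin n := ⟨0, by omega⟩ with hi0
  set i1 : Fin n := ⟨1, by omega⟩ with hi1
  set iN : Fin n := ⟨n - 1, by omega⟩ with hiN
  have hne01 : i1 ≠ i0 := by simp [hi0, hi1, Fin.ext_iff]
  have hne1N : i1 ≠ iN := by simp [hi1, hiN, Fin.ext_iff]; omega
  have hne0N : i0 ≠ iN := by simp [hi0, hiN, Fin.ext_iff]; omega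
  set e0 : Matrix (Fin n) (Fin n) F := single i0 i0 1 with he0
  set eN : Matrix (Fin n) (Fin n) F := single iN iN 1 with heNdef
  have heN : inv eN = e0 := by rw [← he, hinvol]
  -- diagonal vectors
  set dA : Fin n → F := fun t => (if t = i0 then 1 else 0) + (if t = iN then 1 else 0) with hdA
  set dB : Fin n → F := fun t => (if t = i0 then 1 else 0) - (if t = iN then 1 else 0) with hdB
  set va : Fin k → Fin n → F := fun i => a i • dA with hva
  set vb : Fin s → Fin n → F := fun j => b j • dB with hvb
  set A : Matrix (Fin n) (Fin n) F := e0 + eN with hAdef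
  set B : Matrix (Fin n) (Fin n) F := e0 - eN with hBdef
  have hAd : A = Matrix.diagonal dA := by
    rw [hAdef, he0, heNdef, std_diag_eq, std_diag_eq, Matrix.diagonal_add]
  have hBd : B = Matrix.diagonal dB := by
    rw [hBdef, he0, heNdef, std_diag_eq, std_diag_eq, Matrix.diagonal_sub]
  have hdiagA : ∀ i, (a i) • A = Matrix.diagonal (va i) := by
    intro i; rw [hAd, hva, ← Matrix.diagonal_smul]
  have hdiagB : ∀ j, (b j) • B = Matrix.diagonal (vb j) := by
    intro j; rw [hBd, hvb, ← Matrix.diagonal_smul]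
  -- symmetry properties
  have hsymA : ∀ i, UTn ((a i) • A) ∧ inv ((a i) • A) = (a i) • A := by
    intro i
    constructor
    · intro x y hlt
      have hxy : x ≠ y := fun h => by subst h; omega
      rw [hdiagA i, Matrix.diagonal_apply_ne _ hxy]
    · rw [hsmul, hAdef, hadd, he, heN, add_comm]
  have hskwB : ∀ j, UTn ((b j) • B) ∧ inv ((b j) • B) = -((b j) • B) := by
    intro j
    constructor
    · intro x y hlt
      have hxy : x ≠ y := fun h => by subst h; omega
      rw [hdiagB j, Matrix.diagonal_apply_ne _ hxy]
    · have hB : inv B = -B := by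
        have hB' : B = e0 + (-1 : F) • eN := by
          rw [hBdef]; simp [sub_eq_add_neg]
        rw [hB', hadd, hsmul, he, heN]
        simp only [neg_one_smul, neg_add, neg_neg]
        abel
      rw [hsmul, hB, smul_neg]
  obtain ⟨c, hcv⟩ := hc (fun i => (a i) • A) (fun j => (b j) • B) hsymA hskwB
  -- rewrite evaluation through the diagonal algebra hom
  set g : Fin k ⊕ Fin s → Fin n → F := Sum.elim va vb with hg
  have hcomp : (FreeAlgebra.lift F (Sum.elim (fun i => (a i) • A) (fun j => (b j) • B))) =
      (Matrix.diagonalAlgHom (n := Fin n) (α := F) F).comp (FreeAlgebra.lift F g) := by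
    apply FreeAlgebra.hom_ext
    funext x
    cases x with
    | inl i => simp [hg, hdiagA i, Matrix.diagonalAlgHom]; rfl
    | inr j => simp [hg, hdiagB j, Matrix.diagonalAlgHom]; rfl
  set G : Fin n → F := FreeAlgebra.lift F g f with hGdef
  have hG : Matrix.diagonal G = c • (1 : Matrix (Fin n) (Fin n) F) := by
    rw [← hcv, hcomp, AlgHom.comp_apply, Matrix.diagonalAlgHom_apply]
  have hGval : ∀ t : Fin n, G t = c := by
    intro t
    have h := congrArg (fun M => M t t) hG
    simpa using h
  -- component at i0 gives the scalar evaluation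
  have h0comp : FreeAlgebra.lift F (Sum.elim a b) f = G i0 := by
    have heq : (FreeAlgebra.lift F (Sum.elim a b)) =
        (Pi.evalAlgHom F (fun _ : Fin n => F) i0).comp (FreeAlgebra.lift F g) := by
      apply FreeAlgebra.hom_ext
      funext x
      cases x with
      | inl i => simp [hg, hva, hdA, hne0N, Ne.symm hne0N]
      | inr j => simp [hg, hvb, hdB, hne0N, Ne.symm hne0N]
    rw [heq, AlgHom.comp_apply, Pi.evalAlgHom_apply]
  -- component at i1 gives 0
  have h1comp : (0 : F) = G i1 := by
    have heq : (FreeAlgebra.lift F (fun _ : Fin k ⊕ Fin s => (0 : F))) =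
        (Pi.evalAlgHom F (fun _ : Fin n => F) i1).comp (FreeAlgebra.lift F g) := by
      apply FreeAlgebra.hom_ext
      funext x
      cases x with
      | inl i => simp [hg, hva, hdA, hne01, hne1N]
      | inr j => simp [hg, hvb, hdB, hne01, hne1N]
    rw [← hconst, heq, AlgHom.comp_apply, Pi.evalAlgHom_apply]
  rw [h0comp, hGval i0, ← hGval i1, ← h1comp]
end

section
/- Consider the generic matrices Y_k = [[y₁₁^k, y₁₂^k, y₁₃^k],[0,0,y₁₂^k],[0,0,y₁₁^k]] over the polynomial ring F[y_ij^k : i,j,k] where F is an infinite field. For even length 2l ≥ 2, the iterated commutator satisfies [Y₁,Y₂,...,Y_{2l}] = (y₁₁¹y₁₂² - y₁₁²y₁₂¹)·(∏_{s=3}^{2l} y₁₁^s)·(e₁₂ - e₂₃), where [A₁,...,A_n] denotes the left-normed iterated commutator [[A₁,A₂],...,A_n]. -/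
open Matrix MvPolynomial

/-- Left-normed iterated commutator `[[a, b₁], b₂, …]`. -/
def itComm {R : Type*} [Ring R] : R → List R → R
  | a, [] => a
  | a, b :: t => itComm (a * b - b * a) t

/-- The generic matrix `Y_k` over the polynomial ring: variables `(0,k) ↦ y₁₁ᵏ`,
`(1,k) ↦ y₁₂ᵏ`, `(2,k) ↦ y₁₃ᵏ`. -/
noncomputable def Ygen (F : Type*) [Field F] (k : ℕ) :
    Matrix (Fin 3) (Fin 3) (MvPolynomial (Fin 3 × ℕ) F) :=
  !![X (0, k), X (1, k), X (2, k);
     0, 0, X (1, k);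
     0, 0, X (0, k)]

section Aux

variable (F : Type*) [Field F]

local notation "Nmat" => (Matrix.single 0 1 1 - Matrix.single 1 2 1 :
          Matrix (Fin 3) (Fin 3) (MvPolynomial (Fin 3 × ℕ) F))

theorem Nfact16 : Nmat = !![0,1,0;0,0,-1;0,0,0] := by
  ext i j
  fin_cases i <;> fin_cases j <;> simp [Matrix.single, Matrix.vecHead, Matrix.vecTail]

set_option maxHeartbeats 1000000 in
theorem base16 : Ygen F 1 * Ygen F 2 - Ygen F 2 * Ygen F 1 =
    ((X ((0 : Fin 3), (1 : ℕ)) * X (1, 2) - X (0, 2) * X (1, 1) :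
            MvPolynomial (Fin 3 × ℕ) F)) • Nmat := by
  rw [Nfact16]
  ext i j
  fin_cases i <;> fin_cases j <;>
    simp [Ygen, Matrix.mul_apply, Fin.sum_univ_three, Matrix.vecHead, Matrix.vecTail] <;> ring

set_option maxHeartbeats 4000000 in
theorem step16 (c : MvPolynomial (Fin 3 × ℕ) F) (j k : ℕ) :
    ((c • Nmat * Ygen F j - Ygen F j * (c • Nmat)) * Ygen F k -
      Ygen F k * (c • Nmat * Ygen F j - Ygen F j * (c • Nmat))) =
    (c * (X (0, j) * X (0, k))) • Nmat := by
  rw [Nfact16]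
  ext i j'
  fin_cases i <;> fin_cases j' <;>
    simp [Ygen, Matrix.mul_apply, Fin.sum_univ_three, Matrix.vecHead, Matrix.vecTail] <;> ring

theorem main16 (m : ℕ) (c : MvPolynomial (Fin 3 × ℕ) F) (start : ℕ) :
    itComm (c • Nmat) ((List.range (2 * m)).map fun t => Ygen F (t + start)) =
      (c * ∏ t ∈ Finset.range (2 * m), X ((0 : Fin 3), t + start)) • Nmat := by
  induction m generalizing c start with
  | zero => simp [itComm]
  | succ m ih =>
      have h : 2 * (m + 1) = 2 * m + 1 + 1 := by ring
      rw [h, List.range_succ_eq_map, List.range_succ_eq_map]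
      simp only [List.map_cons, List.map_map, itComm]
      rw [step16]
      have hmap : ((fun t => Ygen F (t + start)) ∘ Nat.succ ∘ Nat.succ) =
          fun t => Ygen F (t + (start + 2)) := by
        funext t
        exact congrArg (Ygen F) (by omega : Nat.succ (Nat.succ t) + start = t + (start + 2))
      rw [hmap, ih]
      congr 1
      rw [Finset.prod_range_succ', Finset.prod_range_succ']
      have hp : (∏ t ∈ Finset.range (2 * m), X ((0 : Fin 3), t + (start + 2)) :
          MvPolynomial (Fin 3 × ℕ) F) =
          ∏ t ∈ Finset.range (2 * m), X ((0 : Fin 3), t + 1 + 1 + start) :=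
        Finset.prod_congr rfl (fun t _ => by
          rw [show t + (start + 2) = t + 1 + 1 + start from by omega])
      rw [hp]
      simp only [zero_add, Nat.succ_eq_add_one]
      ring

end Aux

/-- For even length `2l ≥ 2`,
`[Y₁, Y₂, …, Y_{2l}] = (y₁₁¹y₁₂² - y₁₁²y₁₂¹)(∏_{s=3}^{2l} y₁₁ˢ)(e₁₂ - e₂₃)`. -/
theorem stmt16 (F : Type*) [Field F] (l : ℕ) (hl : 1 ≤ l) :
    itComm (Ygen F 1) ((List.range (2 * l - 1)).map fun t => Ygen F (t + 2)) =
      ((X ((0 : Fin 3), (1 : ℕ)) * X (1, 2) - X (0, 2) * X (1, 1) :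
            MvPolynomial (Fin 3 × ℕ) F) *
          ∏ s ∈ Finset.Icc 3 (2 * l), X ((0 : Fin 3), s)) •
        (Matrix.single 0 1 1 - Matrix.single 1 2 1 :
          Matrix (Fin 3) (Fin 3) (MvPolynomial (Fin 3 × ℕ) F)) := by
  have h : 2 * l - 1 = 2 * (l - 1) + 1 := by omega
  rw [h, List.range_succ_eq_map]
  simp only [List.map_cons, List.map_map, itComm]
  rw [base16]
  have hmap : ((fun t => Ygen F (t + 2)) ∘ Nat.succ) = fun t => Ygen F (t + 3) := by
    funext t
    exact congrArg (Ygen F) (by omega : Nat.succ t + 2 = t + 3)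
  rw [hmap, main16]
  congr 1
  congr 1
  rw [← Finset.Ico_add_one_right_eq_Icc, Finset.prod_Ico_eq_prod_range]
  have h2 : 2 * l + 1 - 3 = 2 * (l - 1) := by omega
  rw [h2]
  apply Finset.prod_congr rfl
  intro t _
  rw [show 3 + t = t + 3 from by omega]
end

section
/- Consider generic matrices Z_k = [[z₁₁^k, z₁₂^k, 0],[0,0,-z₁₂^k],[0,0,-z₁₁^k]] over the polynomial ring F[z_ij^k]. For n ≥ 2, the iterated commutator satisfies [Z₁,Z₂,...,Z_n] = (-1)ⁿ(z₁₁¹z₁₂² - z₁₂¹z₁₁²)·(∏_{s=3}^n z₁₁^s)·(e₁₂ - e₂₃). -/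
open Matrix MvPolynomial

/-- The generic skew matrix `Z_k` over the polynomial ring: variables `(0,k) ↦ z₁₁ᵏ`,
`(1,k) ↦ z₁₂ᵏ`. -/
noncomputable def Zgen (F : Type*) [Field F] (k : ℕ) :
    Matrix (Fin 3) (Fin 3) (MvPolynomial (Fin 2 × ℕ) F) :=
  !![X (0, k), X (1, k), 0;
     0, 0, -X (1, k);
     0, 0, -X (0, k)]

lemma itComm_append {R : Type*} [Ring R] (a b : R) (l : List R) :
    itComm a (l ++ [b]) = itComm a l * b - b * itComm a l := by
  induction l generalizing a with
  | nil => rfl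
  | cons h t ih => simp [itComm, ih]

def Zm {R : Type*} [CommRing R] (a b : R) : Matrix (Fin 3) (Fin 3) R :=
  !![a, b, 0; 0, 0, -b; 0, 0, -a]

def Wm (R : Type*) [CommRing R] : Matrix (Fin 3) (Fin 3) R :=
  !![0, 1, 0; 0, 0, -1; 0, 0, 0]

lemma comm_general {R : Type*} [CommRing R] (a b c : R) :
    (c • Wm R) * Zm a b - Zm a b * (c • Wm R) = (-(c * a)) • Wm R := by
  refine Matrix.ext fun i j => ?_
  fin_cases i <;> fin_cases j <;>
    simp [Zm, Wm, mul_apply, Fin.sum_univ_three, Matrix.vecHead, Matrix.vecTail] <;> ring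

lemma base_general {R : Type*} [CommRing R] (a b a' b' : R) :
    Zm a b * Zm a' b' - Zm a' b' * Zm a b = (a * b' - b * a') • Wm R := by
  refine Matrix.ext fun i j => ?_
  fin_cases i <;> fin_cases j <;>
    simp [Zm, Wm, mul_apply, Fin.sum_univ_three, Matrix.vecHead, Matrix.vecTail] <;> ring

lemma Wm_eq (R : Type*) [CommRing R] :
    (Matrix.single 0 1 1 - Matrix.single 1 2 1 : Matrix (Fin 3) (Fin 3) R) = Wm R := by
  refine Matrix.ext fun i j => ?_
  fin_cases i <;> fin_cases j <;> simp [Wm, Matrix.single, Matrix.vecHead, Matrix.vecTail]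

lemma Zgen_eq (F : Type*) [Field F] (k : ℕ) :
    Zgen F k = Zm (X ((0 : Fin 2), k)) (X ((1 : Fin 2), k)) := rfl

/-- For `n ≥ 2`,
`[Z₁, Z₂, …, Z_n] = (-1)ⁿ(z₁₁¹z₁₂² - z₁₂¹z₁₁²)(∏_{s=3}^{n} z₁₁ˢ)(e₁₂ - e₂₃)`. -/
theorem stmt17 (F : Type*) [Field F] (n : ℕ) (hn : 2 ≤ n) :
    itComm (Zgen F 1) ((List.range (n - 1)).map fun t => Zgen F (t + 2)) =
      ((-1 : MvPolynomial (Fin 2 × ℕ) F) ^ n *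
          (X ((0 : Fin 2), (1 : ℕ)) * X (1, 2) - X (1, 1) * X (0, 2)) *
          ∏ s ∈ Finset.Icc 3 n, X ((0 : Fin 2), s)) •
        (Matrix.single 0 1 1 - Matrix.single 1 2 1 :
          Matrix (Fin 3) (Fin 3) (MvPolynomial (Fin 2 × ℕ) F)) := by
  rw [Wm_eq]
  induction n, hn using Nat.le_induction with
  | base =>
      have hr : List.range (2 - 1) = [0] := rfl
      rw [hr, List.map_cons, List.map_nil]
      rw [show Finset.Icc 3 2 = ∅ by decide]
      show Zgen F 1 * Zgen F (0 + 2) - Zgen F (0 + 2) * Zgen F 1 = _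
      rw [show (0 + 2 : ℕ) = 2 from rfl, Zgen_eq, Zgen_eq, base_general]
      rw [Finset.prod_empty, mul_one]
      congr 1
      ring
  | succ n hn ih =>
      have h1 : n + 1 - 1 = (n - 1) + 1 := by omega
      rw [h1, List.range_succ, List.map_append, List.map_cons, List.map_nil,
        itComm_append, ih]
      have h2 : n - 1 + 2 = n + 1 := by omega
      rw [h2, Zgen_eq, comm_general]
      have h3 : Finset.Icc 3 (n + 1) = insert (n + 1) (Finset.Icc 3 n) :=
        (Finset.insert_Icc_right_eq_Icc_add_one (by omega)).symm
      rw [h3, Finset.prod_insert (by simp)]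
      congr 1
      ring
end
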